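/- arXiv:1802.06031 — 10 statements merged into one kernel-verified Lean document; each statement's English description precedes it below -/
import Mathlib

section
/- Let X be a topological space and let E ⊆ X be a set such that (i) W \ E is open for every open W ⊆ X, and (ii) W \ E is nonempty for every nonempty open W ⊆ X. If V ⊆ X is open and V \ E is preconnected, then V is preconnected. (This is the purely topological content of Lemma 3.5 of the paper.) -/
/-- purely topological content of Lemma 3.5. -/
theorem stmt_0 {X : Type*} [TopologicalSpace X] (E : Set X)
    (h1 : ∀ W : Set X, IsOpen W → IsOpen (W \ E))
    (h2 : ∀ W : Set X, IsOpen W → W.Nonempty → (W \ E).Nonempty)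
    (V : Set X) (hV : IsOpen V) (hVE : IsPreconnected (V \ E)) :
    IsPreconnected V := by
  intro U₁ U₂ hU₁ hU₂ hsub ⟨x, hx⟩ ⟨y, hy⟩
  have hsub' : V \ E ⊆ U₁ ∪ U₂ := fun z hz => hsub hz.1
  have h₁ : ((V ∩ U₁) \ E).Nonempty :=
    h2 _ (hV.inter hU₁) ⟨x, hx.1, hx.2⟩
  have h₂ : ((V ∩ U₂) \ E).Nonempty :=
    h2 _ (hV.inter hU₂) ⟨y, hy.1, hy.2⟩
  obtain ⟨a, ⟨haV, haU⟩, haE⟩ := h₁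
  obtain ⟨b, ⟨hbV, hbU⟩, hbE⟩ := h₂
  obtain ⟨z, hz⟩ := hVE U₁ U₂ hU₁ hU₂ hsub' ⟨a, ⟨haV, haE⟩, haU⟩ ⟨b, ⟨hbV, hbE⟩, hbU⟩
  exact ⟨z, hz.1.1, hz.2⟩
end

section
/- Let V ⊆ X be open and let E ∈ 𝒩. If V \ E is preconnected, then V is preconnected. (This is Lemma 3.5 of the paper in capacity-free form: in the paper, X is a metric space with the p-fine topology and 𝒩 is the family of sets of p-capacity zero, for which (N1)–(N5) hold.) -/
/-- Lemma 3.5 in capacity-free form. -/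
theorem stmt_1 {X : Type*} [TopologicalSpace X] (N : Set (Set X))
    (hN1 : ∅ ∈ N)
    (hN2 : ∀ A B : Set X, A ⊆ B → B ∈ N → A ∈ N)
    (hN3 : ∀ A B : Set X, A ∈ N → B ∈ N → A ∪ B ∈ N)
    (hN4 : ∀ W : Set X, IsOpen W → W.Nonempty → W ∉ N)
    (hN5 : ∀ W E : Set X, IsOpen W → E ∈ N → IsOpen (W \ E))
    (V : Set X) (hV : IsOpen V) (E : Set X) (hE : E ∈ N)
    (hVE : IsPreconnected (V \ E)) :
    IsPreconnected V := by
  intro u v hu hv hcov hVu hVv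
  have key : ∀ w : Set X, IsOpen w → (V ∩ w).Nonempty → ((V \ E) ∩ w).Nonempty := by
    intro w hw hne
    by_contra h
    apply hN4 (V ∩ w) (hV.inter hw) hne
    apply hN2 _ E _ hE
    intro x hx
    by_contra hxE
    exact h ⟨x, ⟨⟨hx.1, hxE⟩, hx.2⟩⟩
  have hsub : V \ E ⊆ u ∪ v := fun x hx => hcov hx.1
  obtain ⟨x, hx1, hx2⟩ := hVE u v hu hv hsub (key u hu hVu) (key v hv hVv)
  exact ⟨x, hx1.1, hx2⟩
end

section
/- If a quasiopen set U ⊆ X is quasiconnected, then for every decomposition U = V ∪ E with V open and E ∈ 𝒩, the open set V is preconnected. (This is the implication (ii) ⟹ (iii) of Theorem 3.1 of the paper in capacity-free form.) -/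
/-- A set is quasiopen if it is the union of an open set and a set in `N`. -/
def Quasiopen {X : Type*} [TopologicalSpace X] (N : Set (Set X)) (U : Set X) : Prop :=
  ∃ V E : Set X, IsOpen V ∧ E ∈ N ∧ U = V ∪ E

/-- A quasiopen set is quasiconnected if it cannot be written as the union of
two disjoint quasiopen sets neither of which belongs to `N`. -/
def Quasiconnected {X : Type*} [TopologicalSpace X] (N : Set (Set X)) (U : Set X) : Prop :=
  ¬ ∃ U₁ U₂ : Set X, Quasiopen N U₁ ∧ Quasiopen N U₂ ∧ Disjoint U₁ U₂ ∧
      U₁ ∉ N ∧ U₂ ∉ N ∧ U = U₁ ∪ U₂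

theorem stmt_2 {X : Type*} [TopologicalSpace X] (N : Set (Set X))
    (hN1 : ∅ ∈ N)
    (hN2 : ∀ A B : Set X, A ⊆ B → B ∈ N → A ∈ N)
    (hN3 : ∀ A B : Set X, A ∈ N → B ∈ N → A ∪ B ∈ N)
    (hN4 : ∀ W : Set X, IsOpen W → W.Nonempty → W ∉ N)
    (U : Set X) (hU : Quasiopen N U) (hqc : Quasiconnected N U)
    (V E : Set X) (hV : IsOpen V) (hE : E ∈ N) (hdec : U = V ∪ E) :
    IsPreconnected V := by
  intro u v hu hv hVuv ⟨x, hx⟩ ⟨y, hy⟩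
  by_contra hempty
  rw [Set.not_nonempty_iff_eq_empty] at hempty
  set W₁ := V ∩ u with hW1
  set W₂ := V ∩ v with hW2
  have hW1o : IsOpen W₁ := hV.inter hu
  have hW2o : IsOpen W₂ := hV.inter hv
  have hW12 : W₁ ∩ W₂ = ∅ := by
    rw [← hempty]; ext z; simp [hW1, hW2, Set.mem_inter_iff]; tauto
  have hVW : V = W₁ ∪ W₂ := by
    apply Set.Subset.antisymm
    · intro z hz
      rcases hVuv hz with h | h
      · exact Or.inl ⟨hz, h⟩
      · exact Or.inr ⟨hz, h⟩
    · exact Set.union_subset Set.inter_subset_left Set.inter_subset_left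
  apply hqc
  refine ⟨W₁ ∪ (E \ (W₁ ∪ W₂)), W₂, ⟨W₁, E \ (W₁ ∪ W₂), hW1o,
    hN2 _ _ Set.diff_subset hE, rfl⟩, ⟨W₂, ∅, hW2o, hN1, by simp⟩, ?_, ?_, ?_, ?_⟩
  · rw [Set.disjoint_left]
    rintro z (hz | hz) hz2
    · have h12 : z ∈ W₁ ∩ W₂ := ⟨hz, hz2⟩
      rw [hW12] at h12
      exact h12
    · exact hz.2 (Or.inr hz2)
  · intro h
    exact hN4 W₁ hW1o ⟨x, hx⟩ (hN2 _ _ Set.subset_union_left h)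
  · intro h
    exact hN4 W₂ hW2o ⟨y, hy⟩ h
  · rw [hdec, hVW]
    ext z
    simp only [Set.mem_union, Set.mem_diff]
    tauto
end

section
/- Let U ⊆ X be quasiopen. If for every decomposition U = V ∪ E with V open and E ∈ 𝒩 the open set V is preconnected, then U is quasiconnected. (This is the implication (iii) ⟹ (ii) of Theorem 3.1 of the paper in capacity-free form.) -/
theorem stmt_3 {X : Type*} [TopologicalSpace X] (N : Set (Set X))
    (hN1 : ∅ ∈ N)
    (hN2 : ∀ A B : Set X, A ⊆ B → B ∈ N → A ∈ N)
    (hN3 : ∀ A B : Set X, A ∈ N → B ∈ N → A ∪ B ∈ N)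
    (hN4 : ∀ W : Set X, IsOpen W → W.Nonempty → W ∉ N)
    (U : Set X) (hU : Quasiopen N U)
    (h : ∀ V E : Set X, IsOpen V → E ∈ N → U = V ∪ E → IsPreconnected V) :
    Quasiconnected N U := by
  rintro ⟨U₁, U₂, ⟨V₁, E₁, hV₁, hE₁, hU₁⟩, ⟨V₂, E₂, hV₂, hE₂, hU₂⟩, hdisj, hU₁N, hU₂N, hUeq⟩
  -- V₁ and V₂ are nonempty
  have hV₁ne : V₁.Nonempty := by
    rcases V₁.eq_empty_or_nonempty with he | hne
    · exact absurd (hN2 U₁ E₁ (by simp [hU₁, he]) hE₁) hU₁N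
    · exact hne
  have hV₂ne : V₂.Nonempty := by
    rcases V₂.eq_empty_or_nonempty with he | hne
    · exact absurd (hN2 U₂ E₂ (by simp [hU₂, he]) hE₂) hU₂N
    · exact hne
  have hsub₁ : V₁ ⊆ U₁ := hU₁ ▸ Set.subset_union_left
  have hsub₂ : V₂ ⊆ U₂ := hU₂ ▸ Set.subset_union_left
  have hVdisj : V₁ ∩ V₂ = ∅ := by
    ext x; simp only [Set.mem_inter_iff, Set.mem_empty_iff_false, iff_false]
    rintro ⟨hx₁, hx₂⟩
    exact (Set.disjoint_left.mp hdisj (hsub₁ hx₁)) (hsub₂ hx₂)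
  have hUdecomp : U = (V₁ ∪ V₂) ∪ (E₁ ∪ E₂) := by
    rw [hUeq, hU₁, hU₂]
    ext x; simp; tauto
  have hpre := h (V₁ ∪ V₂) (E₁ ∪ E₂) (hV₁.union hV₂) (hN3 _ _ hE₁ hE₂) hUdecomp
  obtain ⟨x, hx⟩ := hpre V₁ V₂ hV₁ hV₂ subset_rfl
    ⟨hV₁ne.choose, Or.inl hV₁ne.choose_spec, hV₁ne.choose_spec⟩
    ⟨hV₂ne.choose, Or.inr hV₂ne.choose_spec, hV₂ne.choose_spec⟩
  have : x ∈ V₁ ∩ V₂ := ⟨hx.2.1, hx.2.2⟩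
  rw [hVdisj] at this
  exact this
end

section
/- A quasiopen set U ⊆ X is quasiconnected if and only if for every decomposition U = V ∪ E with V open and E ∈ 𝒩 the open set V is preconnected. (This is the equivalence (ii) ⟺ (iii) of Theorem 3.1 of the paper in capacity-free form.) -/
theorem stmt_4 {X : Type*} [TopologicalSpace X] (N : Set (Set X))
    (hN1 : ∅ ∈ N)
    (hN2 : ∀ A B : Set X, A ⊆ B → B ∈ N → A ∈ N)
    (hN3 : ∀ A B : Set X, A ∈ N → B ∈ N → A ∪ B ∈ N)
    (hN4 : ∀ W : Set X, IsOpen W → W.Nonempty → W ∉ N)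
    (U : Set X) (hU : Quasiopen N U) :
    Quasiconnected N U ↔
      ∀ V E : Set X, IsOpen V → E ∈ N → U = V ∪ E → IsPreconnected V := by
  constructor
  · intro hqc V E hV hE hUVE
    by_contra hnc
    rw [IsPreconnected] at hnc
    push_neg at hnc
    obtain ⟨u, v, hu, hv, hsub, hnu, hnv, hdisj⟩ := hnc
    set W₁ := V ∩ u with hW₁
    set W₂ := V ∩ v with hW₂
    have hW₁o : IsOpen W₁ := hV.inter hu
    have hW₂o : IsOpen W₂ := hV.inter hv
    have hW12 : W₁ ∩ W₂ = ∅ := by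
      rw [← hdisj]; ext x; simp only [hW₁, hW₂, Set.mem_inter_iff]; tauto
    have hVW : V = W₁ ∪ W₂ := by
      apply Set.Subset.antisymm
      · intro x hx
        rcases hsub hx with h | h
        · exact Or.inl ⟨hx, h⟩
        · exact Or.inr ⟨hx, h⟩
      · rintro x (⟨h, _⟩ | ⟨h, _⟩) <;> exact h
    set E' := E \ (W₁ ∪ W₂) with hE'
    have hE'N : E' ∈ N := hN2 _ _ Set.diff_subset hE
    apply hqc
    refine ⟨W₁ ∪ E', W₂, ⟨W₁, E', hW₁o, hE'N, rfl⟩, ⟨W₂, ∅, hW₂o, hN1, by simp⟩, ?_, ?_, ?_, ?_⟩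
    · rw [Set.disjoint_left]
      rintro x (h | h) hx2
      · exact Set.eq_empty_iff_forall_notMem.mp hW12 x ⟨h, hx2⟩
      · exact h.2 (Or.inr hx2)
    · intro hmem
      exact hN4 W₁ hW₁o hnu (hN2 _ _ Set.subset_union_left hmem)
    · exact hN4 W₂ hW₂o hnv
    · rw [hUVE, hVW, hE']
      ext x
      simp only [Set.mem_union, Set.mem_diff]
      tauto
  · intro h ⟨U₁, U₂, ⟨V₁, E₁, hV₁, hE₁, hU₁⟩, ⟨V₂, E₂, hV₂, hE₂, hU₂⟩, hdisj, hU₁N, hU₂N, hUU⟩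
    have hpre : IsPreconnected (V₁ ∪ V₂) :=
      h (V₁ ∪ V₂) (E₁ ∪ E₂) (hV₁.union hV₂) (hN3 _ _ hE₁ hE₂)
        (by rw [hUU, hU₁, hU₂]; ext x; simp only [Set.mem_union]; tauto)
    have hV₁ne : V₁.Nonempty := by
      rcases Set.eq_empty_or_nonempty V₁ with h0 | h0
      · exact absurd (by rw [hU₁, h0, Set.empty_union]; exact hE₁) hU₁N
      · exact h0
    have hV₂ne : V₂.Nonempty := by
      rcases Set.eq_empty_or_nonempty V₂ with h0 | h0
      · exact absurd (by rw [hU₂, h0, Set.empty_union]; exact hE₂) hU₂N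
      · exact h0
    have hVdisj : V₁ ∩ V₂ = ∅ := by
      rw [Set.eq_empty_iff_forall_notMem]
      rintro x ⟨h1, h2⟩
      exact Set.disjoint_left.mp hdisj (by rw [hU₁]; exact Or.inl h1)
        (by rw [hU₂]; exact Or.inl h2)
    obtain ⟨x, hx⟩ := hpre V₁ V₂ hV₁ hV₂ (Set.Subset.refl _)
      ⟨hV₁ne.choose, Or.inl hV₁ne.choose_spec, hV₁ne.choose_spec⟩
      ⟨hV₂ne.choose, Or.inr hV₂ne.choose_spec, hV₂ne.choose_spec⟩
    exact (Set.eq_empty_iff_forall_notMem.mp hVdisj) x hx.2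
end

section
/- Every quasiconnected quasiopen set U ⊆ X admits a decomposition U = V ∪ E with V open and preconnected and E ∈ 𝒩; that is, every quasiconnected quasiopen set is weakly quasiconnected. (This is Corollary 3.3 of the paper in capacity-free form.) -/
theorem stmt_5 {X : Type*} [TopologicalSpace X] (N : Set (Set X))
    (hN1 : ∅ ∈ N)
    (hN2 : ∀ A B : Set X, A ⊆ B → B ∈ N → A ∈ N)
    (hN3 : ∀ A B : Set X, A ∈ N → B ∈ N → A ∪ B ∈ N)
    (hN4 : ∀ W : Set X, IsOpen W → W.Nonempty → W ∉ N)
    (U : Set X) (hU : Quasiopen N U) (hqc : Quasiconnected N U) :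
    ∃ V E : Set X, IsOpen V ∧ IsPreconnected V ∧ E ∈ N ∧ U = V ∪ E := by
  obtain ⟨V, E, hV, hE, hUVE⟩ := hU
  refine ⟨V, E, hV, ?_, hE, hUVE⟩
  by_contra hpc
  rw [IsPreconnected] at hpc
  push_neg at hpc
  obtain ⟨u, v, hu, hv, hcov, hVu, hVv, hdisj⟩ := hpc
  set V₁ := V ∩ u with hV₁
  set V₂ := V ∩ v with hV₂
  have hV₁o : IsOpen V₁ := hV.inter hu
  have hV₂o : IsOpen V₂ := hV.inter hv
  have hV₁ne : V₁.Nonempty := hVu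
  have hV₂ne : V₂.Nonempty := hVv
  have hdisj' : V₁ ∩ V₂ = ∅ := by
    have h : V₁ ∩ V₂ ⊆ V ∩ (u ∩ v) := by
      intro x ⟨⟨hx1, hx2⟩, ⟨_, hx4⟩⟩; exact ⟨hx1, hx2, hx4⟩
    exact Set.subset_eq_empty h hdisj
  have hVeq : V = V₁ ∪ V₂ := by
    apply Set.Subset.antisymm
    · intro x hx
      rcases hcov hx with h | h
      · exact Or.inl ⟨hx, h⟩
      · exact Or.inr ⟨hx, h⟩
    · exact Set.union_subset Set.inter_subset_left Set.inter_subset_left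
  apply hqc
  refine ⟨V₁ ∪ (E \ V₂), V₂, ⟨V₁, E \ V₂, hV₁o, hN2 _ _ Set.diff_subset hE, rfl⟩,
    ⟨V₂, ∅, hV₂o, hN1, (Set.union_empty _).symm⟩, ?_, ?_, ?_, ?_⟩
  · rw [Set.disjoint_left]
    rintro x (hx1 | ⟨_, hx⟩) hxv
    · exact Set.eq_empty_iff_forall_notMem.mp hdisj' x ⟨hx1, hxv⟩
    · exact hx hxv
  · exact fun h => hN4 V₁ hV₁o hV₁ne (hN2 _ _ Set.subset_union_left h)
  · exact hN4 V₂ hV₂o hV₂ne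
  · rw [hUVE, hVeq]
    ext x
    simp only [Set.mem_union, Set.mem_diff]
    tauto
end

section
/- An open set V ⊆ X is preconnected if and only if there exist a preconnected open set V' ⊆ X and a set E ∈ 𝒩 such that V = V' ∪ E. (This is the capacity-free form of the claim in the introduction of the paper that a finely open set is finely connected if and only if it is weakly quasiconnected.) -/
theorem stmt_6 {X : Type*} [TopologicalSpace X] (N : Set (Set X))
    (hN1 : ∅ ∈ N)
    (hN2 : ∀ A B : Set X, A ⊆ B → B ∈ N → A ∈ N)
    (hN3 : ∀ A B : Set X, A ∈ N → B ∈ N → A ∪ B ∈ N)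
    (hN4 : ∀ W : Set X, IsOpen W → W.Nonempty → W ∉ N)
    (hN5 : ∀ W E : Set X, IsOpen W → E ∈ N → IsOpen (W \ E))
    (V : Set X) (hV : IsOpen V) :
    IsPreconnected V ↔
      ∃ V' E : Set X, IsOpen V' ∧ IsPreconnected V' ∧ E ∈ N ∧ V = V' ∪ E := by
  constructor
  · intro h
    exact ⟨V, ∅, hV, h, hN1, by simp⟩
  · rintro ⟨V', E, hV', hVc, hE, rfl⟩
    intro u v hu hv hsub ⟨x, hxV, hxu⟩ ⟨y, hyV, hyu⟩
    by_contra hcon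
    rw [Set.not_nonempty_iff_eq_empty] at hcon
    -- helper : if V' ∩ w = ∅ with (V'∪E)∩w nonempty open, contradiction
    have key : ∀ w : Set X, IsOpen w → ((V' ∪ E) ∩ w).Nonempty → V' ∩ w = ∅ → False := by
      intro w hw hne hemp
      have hsubE : (V' ∪ E) ∩ w ⊆ E := by
        rintro z ⟨hz | hz, hzw⟩
        · exact absurd (Set.mem_inter hz hzw) (by rw [hemp]; exact id)
        · exact hz
      exact hN4 _ (hV.inter hw) hne (hN2 _ _ hsubE hE)
    by_cases h1 : (V' ∩ u).Nonempty
    · by_cases h2 : (V' ∩ v).Nonempty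
      · obtain ⟨z, hz⟩ := hVc u v hu hv (fun a ha => hsub (Set.mem_union_left _ ha)) h1 h2
        have : z ∈ (V' ∪ E) ∩ (u ∩ v) := ⟨Set.mem_union_left _ hz.1, hz.2⟩
        rw [hcon] at this
        exact this
      · exact key v hv ⟨y, hyV, hyu⟩ (Set.not_nonempty_iff_eq_empty.mp h2)
    · exact key u hu ⟨x, hxV, hxu⟩ (Set.not_nonempty_iff_eq_empty.mp h1)
end

section
/- Let U ⊆ X be quasiopen and let U = V ∪ E and U = V' ∪ E' be two decompositions of U (so V, V' are open and E, E' ∈ 𝒩). Then V is preconnected if and only if V' is preconnected. (This is the step '¬(4) ⟹ ¬(3)' in the proof of Theorem 1.1 of the paper, in capacity-free form; the Latvala property (L) encapsulates Latvala's theorem.) -/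
/-- If `W` is open, `S ⊆ W` is preconnected and `W \ S` belongs to `N`,
then `W` is preconnected. -/
lemma aux_preconn_of_diff_mem {X : Type*} [TopologicalSpace X] (N : Set (Set X))
    (hN2 : ∀ A B : Set X, A ⊆ B → B ∈ N → A ∈ N)
    (hN4 : ∀ W : Set X, IsOpen W → W.Nonempty → W ∉ N)
    (W S : Set X) (hW : IsOpen W) (hS : IsPreconnected S)
    (hSW : S ⊆ W) (hdiff : W \ S ∈ N) : IsPreconnected W := by
  intro u v hu hv hcov hWu hWv
  by_cases hSu : (S ∩ u).Nonempty
  · by_cases hSv : (S ∩ v).Nonempty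
    · obtain ⟨x, hx⟩ := hS u v hu hv (hSW.trans hcov) hSu hSv
      exact ⟨x, hSW hx.1, hx.2⟩
    · rw [Set.not_nonempty_iff_eq_empty] at hSv
      have hsub : W ∩ v ⊆ W \ S := fun x hx =>
        ⟨hx.1, fun hxS => Set.eq_empty_iff_forall_notMem.mp hSv x ⟨hxS, hx.2⟩⟩
      exact absurd (hN2 _ _ hsub hdiff) (hN4 (W ∩ v) (hW.inter hv) hWv)
  · rw [Set.not_nonempty_iff_eq_empty] at hSu
    have hsub : W ∩ u ⊆ W \ S := fun x hx =>
      ⟨hx.1, fun hxS => Set.eq_empty_iff_forall_notMem.mp hSu x ⟨hxS, hx.2⟩⟩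
    exact absurd (hN2 _ _ hsub hdiff) (hN4 (W ∩ u) (hW.inter hu) hWu)

lemma aux_transfer {X : Type*} [TopologicalSpace X] (N : Set (Set X))
    (hN2 : ∀ A B : Set X, A ⊆ B → B ∈ N → A ∈ N)
    (hN3 : ∀ A B : Set X, A ∈ N → B ∈ N → A ∪ B ∈ N)
    (hN4 : ∀ W : Set X, IsOpen W → W.Nonempty → W ∉ N)
    (hL : ∀ W E : Set X, IsOpen W → IsPreconnected W → E ∈ N → IsPreconnected (W \ E))
    (V E V' E' : Set X) (hV : IsOpen V) (hE : E ∈ N)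
    (hV' : IsOpen V') (hE' : E' ∈ N) (heq : V ∪ E = V' ∪ E')
    (hpc : IsPreconnected V) : IsPreconnected V' := by
  have hS : IsPreconnected (V \ E') := hL V E' hV hpc hE'
  have hSW : V \ E' ⊆ V' := by
    intro x hx
    have : x ∈ V' ∪ E' := heq ▸ Set.mem_union_left _ hx.1
    exact this.resolve_right hx.2
  have hdiffsub : V' \ (V \ E') ⊆ E ∪ E' := by
    intro x hx
    by_cases hxE' : x ∈ E'
    · exact Or.inr hxE'
    · have hxV : x ∉ V := fun h => hx.2 ⟨h, hxE'⟩
      have : x ∈ V ∪ E := heq ▸ Set.mem_union_left _ hx.1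
      exact Or.inl (this.resolve_left hxV)
  exact aux_preconn_of_diff_mem N hN2 hN4 V' (V \ E') hV' hS hSW
    (hN2 _ _ hdiffsub (hN3 _ _ hE hE'))

theorem stmt_7 {X : Type*} [TopologicalSpace X] (N : Set (Set X))
    (hN1 : ∅ ∈ N)
    (hN2 : ∀ A B : Set X, A ⊆ B → B ∈ N → A ∈ N)
    (hN3 : ∀ A B : Set X, A ∈ N → B ∈ N → A ∪ B ∈ N)
    (hN4 : ∀ W : Set X, IsOpen W → W.Nonempty → W ∉ N)
    (hN5 : ∀ W E : Set X, IsOpen W → E ∈ N → IsOpen (W \ E))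
    (hL : ∀ W E : Set X, IsOpen W → IsPreconnected W → E ∈ N → IsPreconnected (W \ E))
    (U : Set X) (hU : Quasiopen N U)
    (V E V' E' : Set X) (hV : IsOpen V) (hE : E ∈ N) (hdec : U = V ∪ E)
    (hV' : IsOpen V') (hE' : E' ∈ N) (hdec' : U = V' ∪ E') :
    IsPreconnected V ↔ IsPreconnected V' := by
  have heq : V ∪ E = V' ∪ E' := hdec ▸ hdec'
  exact ⟨aux_transfer N hN2 hN3 hN4 hL V E V' E' hV hE hV' hE' heq,
    aux_transfer N hN2 hN3 hN4 hL V' E' V E hV' hE' hV hE heq.symm⟩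
end

section
/- For a quasiopen set U ⊆ X the following are equivalent: (a) U is quasiconnected; (b) there exists a decomposition U = V ∪ E with V open and preconnected and E ∈ 𝒩 (i.e., U is weakly quasiconnected); (c) for every decomposition U = V ∪ E with V open and E ∈ 𝒩, the set V is preconnected. (This is the equivalence (2) ⟺ (3) ⟺ (4) of Theorem 1.1 of the paper in capacity-free form; combined with Latvala's theorem it yields the statement for p-quasiopen subsets of unweighted ℝⁿ.) -/
theorem stmt_8 {X : Type*} [TopologicalSpace X] (N : Set (Set X))
    (hN1 : ∅ ∈ N)
    (hN2 : ∀ A B : Set X, A ⊆ B → B ∈ N → A ∈ N)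
    (hN3 : ∀ A B : Set X, A ∈ N → B ∈ N → A ∪ B ∈ N)
    (hN4 : ∀ W : Set X, IsOpen W → W.Nonempty → W ∉ N)
    (hN5 : ∀ W E : Set X, IsOpen W → E ∈ N → IsOpen (W \ E))
    (hL : ∀ W E : Set X, IsOpen W → IsPreconnected W → E ∈ N → IsPreconnected (W \ E))
    (U : Set X) (hU : Quasiopen N U) :
    (Quasiconnected N U ↔
        ∃ V E : Set X, IsOpen V ∧ IsPreconnected V ∧ E ∈ N ∧ U = V ∪ E) ∧
      (Quasiconnected N U ↔
        ∀ V E : Set X, IsOpen V → E ∈ N → U = V ∪ E → IsPreconnected V) := by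
  obtain ⟨V₀, E₀, hV₀, hE₀, hUdec⟩ := hU
  -- (a) → (c)
  have hac : Quasiconnected N U →
      ∀ V E : Set X, IsOpen V → E ∈ N → U = V ∪ E → IsPreconnected V := by
    intro hqc V E hV hE hUVE
    by_contra hnc
    rw [IsPreconnected] at hnc
    push_neg at hnc
    obtain ⟨O₁, O₂, hO₁, hO₂, hcov, hne₁, hne₂, hdisj⟩ := hnc
    have hdisj' : V ∩ (O₁ ∩ O₂) = ∅ := hdisj
    set A₁ : Set X := V ∩ O₁ with hA₁def
    set A₂ : Set X := V ∩ O₂ with hA₂def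
    have hA₁ : IsOpen A₁ := hV.inter hO₁
    have hA₂ : IsOpen A₂ := hV.inter hO₂
    have hA₁A₂ : A₁ ∩ A₂ = ∅ := by
      ext x; simp only [hA₁def, hA₂def, Set.mem_inter_iff, Set.mem_empty_iff_false,
        iff_false]
      rintro ⟨⟨hxV, hx1⟩, _, hx2⟩
      have : x ∈ V ∩ (O₁ ∩ O₂) := ⟨hxV, hx1, hx2⟩
      rw [hdisj'] at this; exact this
    apply hqc
    refine ⟨A₁ \ E, A₂ ∪ E, ⟨A₁ \ E, ∅, hN5 _ _ hA₁ hE, hN1, by simp⟩,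
      ⟨A₂, E, hA₂, hE, rfl⟩, ?_, ?_, ?_, ?_⟩
    · rw [Set.disjoint_left]
      rintro x ⟨hx1, hxE⟩ hx2
      rcases hx2 with hx2 | hx2
      · have : x ∈ A₁ ∩ A₂ := ⟨hx1, hx2⟩
        rw [hA₁A₂] at this; exact this
      · exact hxE hx2
    · intro hmem
      have hA₁N : A₁ ∈ N := hN2 _ _ (fun x hx => by
        by_cases hxE : x ∈ E
        · exact Or.inr hxE
        · exact Or.inl ⟨hx, hxE⟩) (hN3 _ _ hmem hE)
      exact hN4 _ hA₁ hne₁ hA₁N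
    · intro hmem
      exact hN4 _ hA₂ hne₂ (hN2 _ _ Set.subset_union_left hmem)
    · rw [hUVE]
      ext x
      simp only [Set.mem_union, Set.mem_diff, hA₁def, hA₂def, Set.mem_inter_iff]
      constructor
      · rintro (hxV | hxE)
        · by_cases hxE : x ∈ E
          · right; right; exact hxE
          · rcases hcov hxV with h1 | h2
            · left; exact ⟨⟨hxV, h1⟩, hxE⟩
            · right; left; exact ⟨hxV, h2⟩
        · right; right; exact hxE
      · rintro (⟨⟨hxV, _⟩, _⟩ | ⟨hxV, _⟩ | hxE)
        · exact Or.inl hxV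
        · exact Or.inl hxV
        · exact Or.inr hxE
  -- (b) → (a)
  have hba : (∃ V E : Set X, IsOpen V ∧ IsPreconnected V ∧ E ∈ N ∧ U = V ∪ E) →
      Quasiconnected N U := by
    rintro ⟨V, E, hV, hVc, hE, hUVE⟩
    rintro ⟨U₁, U₂, ⟨V₁, E₁, hV₁, hE₁, h1⟩, ⟨V₂, E₂, hV₂, hE₂, h2⟩, hdisj, hn1, hn2, hUeq⟩
    have hF : E ∪ (E₁ ∪ E₂) ∈ N := hN3 _ _ hE (hN3 _ _ hE₁ hE₂)
    set F : Set X := E ∪ (E₁ ∪ E₂) with hFdef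
    have hV' : IsOpen (V \ F) := hN5 _ _ hV hF
    have hV'c : IsPreconnected (V \ F) := hL _ _ hV hVc hF
    have hO₁ : IsOpen (V₁ \ E₂) := hN5 _ _ hV₁ hE₂
    have hO₂ : IsOpen (V₂ \ E₁) := hN5 _ _ hV₂ hE₁
    -- V₁ ∉ N and V₂ ∉ N
    have hV₁N : V₁ ∉ N := fun h => hn1 (h1 ▸ hN3 _ _ h hE₁)
    have hV₂N : V₂ ∉ N := fun h => hn2 (h2 ▸ hN3 _ _ h hE₂)
    -- V₁ \ F ⊆ (V \ F) ∩ (V₁ \ E₂)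
    have hsub₁ : V₁ \ F ⊆ (V \ F) ∩ (V₁ \ E₂) := by
      rintro x ⟨hxV₁, hxF⟩
      have hxU : x ∈ U := hUeq ▸ Or.inl (h1 ▸ Or.inl hxV₁)
      have hxV : x ∈ V := by
        rcases hUVE ▸ hxU with h | h
        · exact h
        · exact absurd (Or.inl h) hxF
      exact ⟨⟨hxV, hxF⟩, hxV₁, fun h => hxF (Or.inr (Or.inr h))⟩
    have hsub₂ : V₂ \ F ⊆ (V \ F) ∩ (V₂ \ E₁) := by
      rintro x ⟨hxV₂, hxF⟩
      have hxU : x ∈ U := hUeq ▸ Or.inr (h2 ▸ Or.inl hxV₂)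
      have hxV : x ∈ V := by
        rcases hUVE ▸ hxU with h | h
        · exact h
        · exact absurd (Or.inl h) hxF
      exact ⟨⟨hxV, hxF⟩, hxV₂, fun h => hxF (Or.inr (Or.inl h))⟩
    have hne₁ : (V₁ \ F).Nonempty := by
      rw [Set.nonempty_iff_ne_empty]
      intro h
      refine hV₁N (hN2 _ _ (fun x hx => ?_) hF)
      by_contra hxF
      have hm : x ∈ V₁ \ F := ⟨hx, hxF⟩
      rw [h] at hm
      exact hm
    have hne₂ : (V₂ \ F).Nonempty := by
      rw [Set.nonempty_iff_ne_empty]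
      intro h
      refine hV₂N (hN2 _ _ (fun x hx => ?_) hF)
      by_contra hxF
      have hm : x ∈ V₂ \ F := ⟨hx, hxF⟩
      rw [h] at hm
      exact hm
    have hcov : V \ F ⊆ (V₁ \ E₂) ∪ (V₂ \ E₁) := by
      rintro x ⟨hxV, hxF⟩
      have hxU : x ∈ U₁ ∪ U₂ := hUeq ▸ (hUVE ▸ (Or.inl hxV : x ∈ V ∪ E))
      rcases hxU with hx1 | hx2
      · left
        have hxV₁ : x ∈ V₁ := by
          rcases h1 ▸ hx1 with h | h
          · exact h
          · exact absurd (Or.inr (Or.inl h)) hxF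
        refine ⟨hxV₁, fun hxE₂ => ?_⟩
        exact Set.disjoint_left.mp hdisj hx1 (h2 ▸ Or.inr hxE₂)
      · right
        have hxV₂ : x ∈ V₂ := by
          rcases h2 ▸ hx2 with h | h
          · exact h
          · exact absurd (Or.inr (Or.inr h)) hxF
        refine ⟨hxV₂, fun hxE₁ => ?_⟩
        exact Set.disjoint_left.mp hdisj (h1 ▸ Or.inr hxE₁) hx2
    obtain ⟨z, hz⟩ := hV'c _ _ hO₁ hO₂ hcov
      ⟨(hne₁.choose), hsub₁ hne₁.choose_spec⟩
      ⟨(hne₂.choose), hsub₂ hne₂.choose_spec⟩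
    obtain ⟨_, ⟨hzV₁, _⟩, hzV₂, _⟩ := hz
    have hz1 : z ∈ U₁ := by rw [h1]; exact Or.inl hzV₁
    have hz2 : z ∈ U₂ := by rw [h2]; exact Or.inl hzV₂
    exact Set.disjoint_left.mp hdisj hz1 hz2
  constructor
  · exact ⟨fun h => ⟨V₀, E₀, hV₀, hac h _ _ hV₀ hE₀ hUdec, hE₀, hUdec⟩, hba⟩
  · exact ⟨hac, fun h => hba ⟨V₀, E₀, hV₀, h _ _ hV₀ hE₀ hUdec, hE₀, hUdec⟩⟩
end

section
/- An open set V ⊆ X is quasiconnected (regarded as a quasiopen set via the decomposition V = V ∪ ∅) if and only if V is preconnected. (This is the equivalence (2) ⟺ (3) of Theorem 1.2 of the paper in capacity-free form.) -/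
theorem stmt_9 {X : Type*} [TopologicalSpace X] (N : Set (Set X))
    (hN1 : ∅ ∈ N)
    (hN2 : ∀ A B : Set X, A ⊆ B → B ∈ N → A ∈ N)
    (hN3 : ∀ A B : Set X, A ∈ N → B ∈ N → A ∪ B ∈ N)
    (hN4 : ∀ W : Set X, IsOpen W → W.Nonempty → W ∉ N)
    (hN5 : ∀ W E : Set X, IsOpen W → E ∈ N → IsOpen (W \ E))
    (hL : ∀ W E : Set X, IsOpen W → IsPreconnected W → E ∈ N → IsPreconnected (W \ E))
    (V : Set X) (hV : IsOpen V) :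
    Quasiconnected N V ↔ IsPreconnected V := by
  constructor
  · -- quasiconnected → preconnected
    intro hqc
    by_contra hpc
    rw [IsPreconnected] at hpc
    push_neg at hpc
    obtain ⟨u, v, hu, hv, hcov, ⟨x, hxV, hxu⟩, ⟨y, hyV, hyv⟩, hempty⟩ := hpc
    apply hqc
    refine ⟨V ∩ u, V ∩ v, ⟨V ∩ u, ∅, hV.inter hu, hN1, by simp⟩,
      ⟨V ∩ v, ∅, hV.inter hv, hN1, by simp⟩, ?_, ?_, ?_, ?_⟩
    · rw [Set.disjoint_iff_inter_eq_empty]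
      rw [← hempty]
      ext z; simp [Set.mem_inter_iff]; tauto
    · exact hN4 _ (hV.inter hu) ⟨x, hxV, hxu⟩
    · exact hN4 _ (hV.inter hv) ⟨y, hyV, hyv⟩
    · ext z
      simp only [Set.mem_union, Set.mem_inter_iff]
      constructor
      · intro hz
        rcases hcov hz with h | h
        · exact Or.inl ⟨hz, h⟩
        · exact Or.inr ⟨hz, h⟩
      · rintro (⟨h, _⟩ | ⟨h, _⟩) <;> exact h
  · -- preconnected → quasiconnected
    intro hpc
    rintro ⟨U₁, U₂, ⟨V₁, E₁, hV₁, hE₁, hU₁⟩, ⟨V₂, E₂, hV₂, hE₂, hU₂⟩, hdisj, hU₁N, hU₂N, hVeq⟩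
    have hE : E₁ ∪ E₂ ∈ N := hN3 _ _ hE₁ hE₂
    have hS : IsPreconnected (V \ (E₁ ∪ E₂)) := hL V _ hV hpc hE
    -- S ⊆ V₁ ∪ V₂
    have hcov : V \ (E₁ ∪ E₂) ⊆ V₁ ∪ V₂ := by
      intro z hz
      have := hz.1
      rw [hVeq, hU₁, hU₂] at this
      rcases this with (h | h) | (h | h)
      · exact Or.inl h
      · exact absurd (Or.inl h) hz.2
      · exact Or.inr h
      · exact absurd (Or.inr h) hz.2
    -- V₁ ∩ V₂ disjoint
    have hV12 : V₁ ∩ V₂ = ∅ := by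
      rw [Set.eq_empty_iff_forall_notMem]
      intro z ⟨h1, h2⟩
      have m1 : z ∈ U₁ := by rw [hU₁]; exact Or.inl h1
      have m2 : z ∈ U₂ := by rw [hU₂]; exact Or.inl h2
      exact Set.disjoint_left.mp hdisj m1 m2
    -- nonempty intersections
    have hne : ∀ (Vi Ei Ui : Set X), Ui = Vi ∪ Ei → Ei ∈ N → Ui ∉ N → Ui ⊆ V →
        ((V \ (E₁ ∪ E₂)) ∩ Vi).Nonempty := by
      intro Vi Ei Ui hUi hEi hUiN hUiV
      rw [Set.nonempty_iff_ne_empty]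
      intro h
      apply hUiN
      rw [hUi]
      apply hN3 _ _ _ hEi
      apply hN2 _ (E₁ ∪ E₂) _ hE
      intro z hz
      by_contra hz2
      have m : z ∈ Ui := by rw [hUi]; exact Or.inl hz
      exact Set.eq_empty_iff_forall_notMem.mp h z ⟨⟨hUiV m, hz2⟩, hz⟩
    have hsub1 : U₁ ⊆ V := hVeq ▸ Set.subset_union_left
    have hsub2 : U₂ ⊆ V := hVeq ▸ Set.subset_union_right
    have hn1 := hne V₁ E₁ U₁ hU₁ hE₁ hU₁N hsub1
    have hn2 := hne V₂ E₂ U₂ hU₂ hE₂ hU₂N hsub2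
    obtain ⟨z, hz⟩ := hS V₁ V₂ hV₁ hV₂ hcov hn1 hn2
    exact Set.eq_empty_iff_forall_notMem.mp hV12 z hz.2
end
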